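/- In the braid group B_5, the word σ1⁻¹ σ1⁻¹ σ1⁻¹ σ2⁻¹ σ1 σ3⁻¹ σ2 σ3⁻¹ σ2⁻¹ σ4⁻¹ σ3 σ4⁻¹ (a braid representative of the knot 11n1) equals the product of the negative bands of its negative band decomposition with band centers {1, 2, 4, 8, 10, 12}; in particular, this braid is quasinegative. -/

import Mathlib

/-!
Consecutive bands of a band decomposition telescope: for centers `p < p'` the element
`α_p⁻¹ α_{p'}` is the product of the non-center letters strictly between them. Hence the product
of all bands, followed by the product of all non-center letters, is the word itself. For this word
the non-center letters (positions 3, 5, 6, 7, 9, 11) read `σ₁⁻¹ σ₁ σ₃⁻¹ σ₂ σ₂⁻¹ σ₃`, which cancels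
freely, and every center carries an inverse generator, so every band is negative.
-/

/-- The Artin relations for the braid group with `m` generators
`σ_1, …, σ_m` (indexed by `Fin m`), i.e. the braid group `B_{m+1}`:
`σ_i σ_j = σ_j σ_i` for `|i - j| ≥ 2`, and
`σ_i σ_{i+1} σ_i = σ_{i+1} σ_i σ_{i+1}`. -/
def braidRels (m : ℕ) : Set (FreeGroup (Fin m)) :=
  { r | (∃ i j : Fin m, (i : ℕ) + 2 ≤ (j : ℕ) ∧
          r = FreeGroup.of i * FreeGroup.of j * (FreeGroup.of i)⁻¹ * (FreeGroup.of j)⁻¹) ∨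
        (∃ i j : Fin m, (i : ℕ) + 1 = (j : ℕ) ∧
          r = FreeGroup.of i * FreeGroup.of j * FreeGroup.of i *
              (FreeGroup.of j)⁻¹ * (FreeGroup.of i)⁻¹ * (FreeGroup.of j)⁻¹) }

/-- The braid group `B_{m+1}`, presented with `m` Artin generators.
Here index `i : Fin m` corresponds to the Artin generator `σ_{i+1}`. -/
abbrev BraidGrp (m : ℕ) := PresentedGroup (braidRels m)

/-- The Artin generator `σ_{i+1}` of the braid group `B_{m+1}`. -/
def σ {m : ℕ} (i : Fin m) : BraidGrp m := PresentedGroup.of i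

/-- A letter of a braid word: a generator index together with a sign
(`true` = the positive generator, `false` = its inverse). -/
abbrev Letter (m : ℕ) := Fin m × Bool

/-- The group element represented by a letter. -/
def letterEl {m : ℕ} (x : Letter m) : BraidGrp m :=
  if x.2 then σ x.1 else (σ x.1)⁻¹

/-- The group element represented by a braid word. -/
def wordProd {m : ℕ} (w : List (Letter m)) : BraidGrp m :=
  (w.map letterEl).prod

/-- The band of the band decomposition of the word `w` with band centers `S`
(1-based positions) at center `p`: namely `α_p * x_p * α_p⁻¹`, where `x_p` is
the letter of `w` at position `p` and `α_p` is the product, in increasing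
order of position, of the letters of `w` at positions `q < p` with `q ∉ S`. -/
def band {m : ℕ} (w : List (Letter m)) (S : List ℕ) (p : ℕ) : BraidGrp m :=
  let α : BraidGrp m :=
    wordProd (((w.zipIdx.map Prod.swap).filter fun qx => decide (qx.1 + 1 < p ∧ qx.1 + 1 ∉ S)).map Prod.snd)
  match w[p - 1]? with
  | some x => α * letterEl x * α⁻¹
  | none => 1

/-- The product, in increasing order of band center, of the bands of the
band decomposition of the word `w` with band centers `S`. -/
def bandProd {m : ℕ} (w : List (Letter m)) (S : List ℕ) : BraidGrp m :=
  (S.map (band w S)).prod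

/-- A positive band in the braid group: a conjugate `α σ_j α⁻¹` of a generator. -/
def IsPositiveBand {m : ℕ} (x : BraidGrp m) : Prop :=
  ∃ (α : BraidGrp m) (j : Fin m), x = α * σ j * α⁻¹

/-- A braid is quasipositive if it is a product of positive bands. -/
def IsQuasipositive {m : ℕ} (x : BraidGrp m) : Prop :=
  ∃ l : List (BraidGrp m), (∀ b ∈ l, IsPositiveBand b) ∧ x = l.prod

/-- A negative band in the braid group: a conjugate `α σ_j⁻¹ α⁻¹` of the
inverse of a generator. -/
def IsNegativeBand {m : ℕ} (x : BraidGrp m) : Prop :=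
  ∃ (α : BraidGrp m) (j : Fin m), x = α * (σ j)⁻¹ * α⁻¹

/-- A braid is quasinegative if it is a product of negative bands. -/
def IsQuasinegative {m : ℕ} (x : BraidGrp m) : Prop :=
  ∃ l : List (BraidGrp m), (∀ b ∈ l, IsNegativeBand b) ∧ x = l.prod

/-- The braid word for the knot `11n1` (letter `(i, true)` is `σ_(i+1)`,
`(i, false)` is `σ_(i+1)⁻¹`). -/
def theWord : List (Letter 4) :=
  [(0, false), (0, false), (0, false), (1, false), (0, true), (2, false), (1, true), (2, false), (1, false), (3, false), (2, true), (3, false)]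

/-- The band centers. -/
def theCenters : List ℕ := [1, 2, 4, 8, 10, 12]

section BandDecomposition

variable {m : ℕ}

/-- The conjugating element `α_p` bound by the `let` in `band`. -/
def bandConjugator (w : List (Letter m)) (S : List ℕ) (p : ℕ) : BraidGrp m :=
  wordProd (((w.zipIdx.map Prod.swap).filter fun qx =>
    decide (qx.1 + 1 < p ∧ qx.1 + 1 ∉ S)).map Prod.snd)

theorem wordProd_append (v w : List (Letter m)) :
    wordProd (v ++ w) = wordProd v * wordProd w := by
  simp [wordProd]

theorem wordProd_singleton (x : Letter m) : wordProd [x] = letterEl x := by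
  simp [wordProd]

theorem band_of_getElem?_eq_some {w : List (Letter m)} {S : List ℕ} {p : ℕ} {x : Letter m}
    (h : w[p - 1]? = some x) :
    band w S p = bandConjugator w S p * letterEl x * (bandConjugator w S p)⁻¹ := by
  simp only [band, h, bandConjugator]

theorem band_of_length_lt {w : List (Letter m)} {S : List ℕ} {p : ℕ} (h : w.length < p) :
    band w S p = 1 := by
  have : w[p - 1]? = none := List.getElem?_eq_none (by omega)
  simp only [band, this]

theorem bandConjugator_append_singleton (w : List (Letter m)) (x : Letter m) (S : List ℕ)
    (p : ℕ) :
    bandConjugator (w ++ [x]) S p = bandConjugator w S p *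
      if w.length + 1 < p ∧ w.length + 1 ∉ S then letterEl x else 1 := by
  by_cases h : w.length + 1 < p ∧ w.length + 1 ∉ S <;>
    simp [bandConjugator, List.zipIdx_append, List.filter_append, h, wordProd_append,
      wordProd_singleton]

theorem bandConjugator_of_length_lt {w : List (Letter m)} {S : List ℕ} {p : ℕ}
    (h : w.length < p) : bandConjugator w S p = bandConjugator w S (w.length + 1) := by
  unfold bandConjugator
  congr 2
  refine List.filter_congr fun qx hqx => ?_
  obtain ⟨a, ha, rfl⟩ := List.mem_map.mp hqx
  have hq : a.2 < w.length := by simpa using (List.mem_zipIdx ha).2.1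
  simp only [Prod.fst_swap, show a.2 + 1 < p by omega, show a.2 + 1 < w.length + 1 by omega,
    true_and]

theorem band_append_singleton_of_ne {w : List (Letter m)} {x : Letter m} {S : List ℕ} {p : ℕ}
    (hp : 0 < p) (hne : p ≠ w.length + 1) : band (w ++ [x]) S p = band w S p := by
  rcases Nat.lt_or_gt_of_ne hne with hlt | hgt
  · have hy : w[p - 1]? = some w[p - 1] := List.getElem?_eq_getElem (by omega)
    have hy' : (w ++ [x])[p - 1]? = some w[p - 1] := by
      rw [List.getElem?_append_left (by omega), hy]
    rw [band_of_getElem?_eq_some hy, band_of_getElem?_eq_some hy',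
      bandConjugator_append_singleton, if_neg (by omega), mul_one]
  · rw [band_of_length_lt (by simpa using hgt), band_of_length_lt (by omega)]

theorem band_append_singleton_length (w : List (Letter m)) (x : Letter m) (S : List ℕ) :
    band (w ++ [x]) S (w.length + 1) = bandConjugator w S (w.length + 1) * letterEl x *
      (bandConjugator w S (w.length + 1))⁻¹ := by
  rw [band_of_getElem?_eq_some (x := x) (by simp), bandConjugator_append_singleton,
    if_neg (by omega), mul_one]

theorem bandProd_mul_bandConjugator (w : List (Letter m)) {S : List ℕ}
    (hS : S.Pairwise (· < ·)) (hpos : ∀ p ∈ S, 0 < p) :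
    bandProd w S * bandConjugator w S (w.length + 1) = wordProd w := by
  induction w using List.reverseRecOn with
  | nil =>
    rw [bandProd, List.prod_eq_one fun b hb => ?_]
    · rfl
    · obtain ⟨p, hp, rfl⟩ := List.mem_map.mp hb
      exact band_of_length_lt (hpos p hp)
  | append_singleton w x ih =>
    have hlen : (w ++ [x]).length + 1 = w.length + 1 + 1 := by simp
    rw [hlen, bandConjugator_append_singleton, bandConjugator_of_length_lt (by omega),
      wordProd_append, wordProd_singleton, ← ih]
    by_cases hL : w.length + 1 ∈ S
    · obtain ⟨A, B, hAB⟩ := List.append_of_mem hL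
      have hsplit (f : ℕ → BraidGrp m) :
          (S.map f).prod = (A.map f).prod * f (w.length + 1) * (B.map f).prod := by
        simp [hAB, mul_assoc]
      rw [hAB, List.pairwise_append, List.pairwise_cons] at hS
      have hA : (A.map (band (w ++ [x]) S)).prod = (A.map (band w S)).prod :=
        congrArg List.prod <| List.map_congr_left fun q hq =>
          band_append_singleton_of_ne (hpos q (by simp [hAB, hq]))
            (hS.2.2 q hq _ List.mem_cons_self).ne
      have hB (v : List (Letter m)) (hv : v.length ≤ w.length + 1) :
          (B.map (band v S)).prod = 1 :=
        List.prod_eq_one fun b hb => by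
          obtain ⟨q, hq, rfl⟩ := List.mem_map.mp hb
          exact band_of_length_lt (by have := hS.2.1.1 q hq; omega)
      rw [bandProd, bandProd, hsplit, hsplit, hA, hB w (by omega), hB (w ++ [x]) (by simp),
        band_append_singleton_length, band_of_length_lt (Nat.lt_succ_self _),
        if_neg fun h => h.2 hL]
      group
    · have hbands : bandProd (w ++ [x]) S = bandProd w S :=
        congrArg List.prod <| List.map_congr_left fun p hp =>
          band_append_singleton_of_ne (hpos p hp) (by rintro rfl; exact hL hp)
      rw [hbands, if_pos ⟨by omega, hL⟩]
      simp [mul_assoc]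

theorem wordProd_eq_bandProd {w : List (Letter m)} {S : List ℕ}
    (hS : S.Pairwise (· < ·)) (hpos : ∀ p ∈ S, 0 < p)
    (hcancel : bandConjugator w S (w.length + 1) = 1) : wordProd w = bandProd w S := by
  rw [← bandProd_mul_bandConjugator w hS hpos, hcancel, mul_one]

theorem isNegativeBand_band {w : List (Letter m)} {S : List ℕ} {p : ℕ} {j : Fin m}
    (h : w[p - 1]? = some (j, false)) : IsNegativeBand (band w S p) :=
  ⟨bandConjugator w S p, j, band_of_getElem?_eq_some h⟩

theorem isQuasinegative_bandProd {w : List (Letter m)} {S : List ℕ}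
    (h : ∀ p ∈ S, ∃ j, w[p - 1]? = some (j, false)) : IsQuasinegative (bandProd w S) := by
  refine ⟨S.map (band w S), fun b hb => ?_, rfl⟩
  obtain ⟨p, hp, rfl⟩ := List.mem_map.mp hb
  obtain ⟨j, hj⟩ := h p hp
  exact isNegativeBand_band hj

end BandDecomposition

/-- The braid representative of `11n1` equals the product of the bands of its
band decomposition with the given band centers; in particular it is quasinegative. -/
theorem knot_11n1_quasinegative :
    wordProd theWord = bandProd theWord theCenters ∧
      IsQuasinegative (wordProd theWord) := by
  have hcancel : bandConjugator theWord theCenters (theWord.length + 1) = 1 := by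
    change wordProd [(0, false), (0, true), (2, false), (1, true), (1, false), (2, true)] = 1
    simp [wordProd, letterEl]
  have heq := wordProd_eq_bandProd (by decide) (by decide) hcancel
  exact ⟨heq, heq ▸ isQuasinegative_bandProd (by decide)⟩
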